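/- For F strictly convex with continuous second derivative on Θ, θ ∈ Θ, Δ > 0 and θ_Δ := μ⁻¹(μ(θ)+Δ) > θ (μ strictly increasing), the ratio K(θ,θ')/|θ−θ'| is bounded below on Θ_{θ,Δ} = {θ' : θ' ≥ θ_Δ} by the positive constant (F(θ_Δ) − F(θ))/(θ_Δ − θ) − F'(θ). In particular for every θ' ∈ Θ_{θ,Δ}, K(θ,θ') − δ|θ−θ'| ≥ (1 − δ·C)·K(θ,θ') where C = ((F(θ_Δ)−F(θ))/(θ_Δ−θ) − F'(θ))⁻¹. -/

import Mathlib

open Real Set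

/-!
For `θ < θ'`, `K(θ, θ') / (θ' - θ)` is the slope of `F` on `[θ, θ']` minus `F'(θ)`. Slopes of a
convex function from a fixed point increase with the other endpoint, and strict convexity puts
the slope on `[θ, θΔ]` strictly above `F'(θ)`; the second claim is this bound multiplied by `δ C`.
-/

noncomputable def bregmanDiv (f : ℝ → ℝ) (x z : ℝ) : ℝ :=
  f z - f x - deriv f x * (z - x)

theorem bregmanDiv_div_eq_slope_sub_deriv (f : ℝ → ℝ) {x z : ℝ} (hxz : x ≠ z) :
    bregmanDiv f x z / (z - x) = slope f x z - deriv f x := by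
  have hne : z - x ≠ 0 := sub_ne_zero.2 hxz.symm
  rw [bregmanDiv, slope_def_field]
  field_simp

theorem ConvexOn.slope_sub_deriv_le_bregmanDiv_div {s : Set ℝ} {f : ℝ → ℝ}
    (hf : ConvexOn ℝ s f) {x y z : ℝ} (hx : x ∈ s) (hy : y ∈ s) (hz : z ∈ s)
    (hxy : x < y) (hyz : y ≤ z) :
    slope f x y - deriv f x ≤ bregmanDiv f x z / |x - z| := by
  have hxz : x < z := hxy.trans_le hyz
  rw [abs_sub_comm, abs_of_pos (sub_pos.2 hxz),
    bregmanDiv_div_eq_slope_sub_deriv f hxz.ne]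
  gcongr
  exact hf.slope_mono hx ⟨hy, hxy.ne'⟩ ⟨hz, hxz.ne'⟩ hyz

theorem one_sub_mul_inv_mul_le_sub_mul {c k d δ : ℝ} (hc : 0 < c) (hd : 0 < d)
    (hδ : 0 ≤ δ) (hck : c ≤ k / d) :
    (1 - δ * c⁻¹) * k ≤ k - δ * d := by
  have hdk : d ≤ c⁻¹ * k := by
    rw [le_inv_mul_iff₀ hc]
    rwa [le_div_iff₀ hd] at hck
  nlinarith [mul_le_mul_of_nonneg_left hdk hδ]

theorem kl_ratio_lower_bound_on_level_set_general
    (Θ : Set ℝ) (hΘ : IsOpen Θ)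
    (F : ℝ → ℝ) (hF : ContDiffOn ℝ 2 F Θ) (hconv : StrictConvexOn ℝ Θ F)
    (K : ℝ → ℝ → ℝ)
    (hK : ∀ t t', K t t' = F t' - F t - deriv F t * (t' - t))
    (θ θΔ : ℝ) (hθ : θ ∈ Θ) (hθΔ : θΔ ∈ Θ) (hlt : θ < θΔ)
    (C : ℝ) (hC : C = ((F θΔ - F θ) / (θΔ - θ) - deriv F θ)⁻¹)
    (δ : ℝ) (hδ : 0 < δ) :
    0 < (F θΔ - F θ) / (θΔ - θ) - deriv F θ ∧
    ∀ θ' ∈ Θ, θΔ ≤ θ' →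
      (F θΔ - F θ) / (θΔ - θ) - deriv F θ ≤ K θ θ' / |θ - θ'| ∧
      (1 - δ * C) * K θ θ' ≤ K θ θ' - δ * |θ - θ'| := by
  have hdiff : DifferentiableAt ℝ F θ :=
    (hF.differentiableOn (by norm_num)).differentiableAt (hΘ.mem_nhds hθ)
  have hpos : 0 < slope F θ θΔ - deriv F θ :=
    sub_pos.2 (hconv.deriv_lt_slope hθ hθΔ hlt hdiff)
  rw [slope_def_field] at hpos
  refine ⟨hpos, fun θ' hθ' hle => ?_⟩
  have hratio : (F θΔ - F θ) / (θΔ - θ) - deriv F θ ≤ K θ θ' / |θ - θ'| := by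
    rw [hK, ← slope_def_field]
    exact hconv.convexOn.slope_sub_deriv_le_bregmanDiv_div hθ hθΔ hθ' hlt hle
  have hdist : 0 < |θ - θ'| := abs_pos.2 (sub_ne_zero.2 (hlt.trans_le hle).ne)
  exact ⟨hratio, hC ▸ one_sub_mul_inv_mul_le_sub_mul hpos hdist hδ.le hratio⟩

/-- For `F` strictly convex with continuous second derivative, `θΔ > θ`, the ratio
`K(θ,θ')/|θ-θ'|` is bounded below on `{θ' : θ' ≥ θΔ}` by the positive constant
`C⁻¹ = (F(θΔ)-F(θ))/(θΔ-θ) - F'(θ)`, and consequently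
`K(θ,θ') - δ|θ-θ'| ≥ (1 - δ C) K(θ,θ')` there. -/
theorem kl_ratio_lower_bound_on_level_set
    (Θ : Set ℝ) (hΘ : IsOpen Θ) (hconn : Θ.OrdConnected)
    (F : ℝ → ℝ) (hF : ContDiffOn ℝ 2 F Θ) (hconv : StrictConvexOn ℝ Θ F)
    (K : ℝ → ℝ → ℝ)
    (hK : ∀ t t', K t t' = F t' - F t - deriv F t * (t' - t))
    (θ θΔ : ℝ) (hθ : θ ∈ Θ) (hθΔ : θΔ ∈ Θ) (hlt : θ < θΔ)
    (C : ℝ) (hC : C = ((F θΔ - F θ) / (θΔ - θ) - deriv F θ)⁻¹)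
    (δ : ℝ) (hδ : 0 < δ) (hδC : 1 - δ * C > 0) :
    0 < (F θΔ - F θ) / (θΔ - θ) - deriv F θ ∧
    ∀ θ' ∈ Θ, θΔ ≤ θ' →
      (F θΔ - F θ) / (θΔ - θ) - deriv F θ ≤ K θ θ' / |θ - θ'| ∧
      (1 - δ * C) * K θ θ' ≤ K θ θ' - δ * |θ - θ'| :=
  kl_ratio_lower_bound_on_level_set_general Θ hΘ F hF hconv K hK θ θΔ hθ hθΔ hlt C hC δ hδ
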